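/- Let g ≥ 2 and let π_g be the genus-g surface group. The level of a nontrivial element is a conjugacy invariant: suppose h₁, h₂ ∈ π_g are nontrivial and conjugate in π_g, and suppose k₁, k₂ ∈ π_g satisfy Subgroup.centralizer {hᵢ} = Subgroup.zpowers kᵢ for i = 1,2, and l₁, l₂ ∈ ℤ satisfy h₁ = k₁^{l₁} and h₂ = k₂^{l₂}. Then |l₁| = |l₂|. -/

import Mathlib

/-!
Surface groups are torsion-free, so the generator `k₂` of the centralizer of `h₂ ≠ 1` has
infinite order. Conjugating by `c` with `c * h₁ * c⁻¹ = h₂` carries the centralizer of `h₁` onto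
that of `h₂`, hence `c * k₁ * c⁻¹ = k₂ ^ (±1)` and `l₂ = ±l₁`.

For torsion-freeness, write `aᵢ = Sum.inl i`, `bᵢ = Sum.inr i` (`i : Fin g`, `g ≥ 1`) and read
the relator as `a₀ b₀ a₀⁻¹ = C⁻¹ b₀` with `C = ∏_{i ≥ 1} [aᵢ, bᵢ]`: this exhibits `π_g` as the
HNN extension of the free group on the other `2g - 1` generators with stable letter `a₀`. An HNN
extension of a torsion-free group is torsion-free: by Britton's lemma every element is conjugate
either into the base group or to a cyclically reduced word, and the powers of a nonempty
cyclically reduced word are again reduced, hence nontrivial.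
-/

open scoped commutatorElement

/-- The single relator of the genus-`g` surface group:
`∏ i, [aᵢ, bᵢ]` where `aᵢ, bᵢ` are the free generators indexed by `Sum.inl i`, `Sum.inr i`. -/
def surfaceRelator (g : ℕ) : FreeGroup (Fin g ⊕ Fin g) :=
  ((List.finRange g).map fun i =>
    ⁅FreeGroup.of (Sum.inl i : Fin g ⊕ Fin g), FreeGroup.of (Sum.inr i)⁆).prod

/-- The genus-`g` surface group `π_g`, presented with generators `a₁,…,a_g,b₁,…,b_g`
and the single relator `∏ i, [aᵢ, bᵢ]`. -/
def SurfaceGroup (g : ℕ) : Type :=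
  PresentedGroup ({surfaceRelator g} : Set (FreeGroup (Fin g ⊕ Fin g)))

instance (g : ℕ) : Group (SurfaceGroup g) := by unfold SurfaceGroup; infer_instance

open Subgroup

theorem Subgroup.centralizer_singleton_conj {G : Type*} [Group G] (c h : G) :
    centralizer {c * h * c⁻¹} = (centralizer {h}).map (MulAut.conj c).toMonoidHom := by
  ext z
  obtain ⟨w, rfl⟩ := (MulAut.conj c).surjective z
  rw [mem_map_equiv, MulEquiv.symm_apply_apply, mem_centralizer_singleton_iff,
    mem_centralizer_singleton_iff, ← MulAut.conj_apply, ← map_mul, ← map_mul,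
    (MulAut.conj c).injective.eq_iff]

theorem abs_eq_abs_of_isConj_of_centralizer_eq_zpowers {G : Type*} [Group G] {h₁ h₂ k₁ k₂ : G}
    (hk : ¬IsOfFinOrder k₂) (hconj : IsConj h₁ h₂)
    (hk₁ : centralizer {h₁} = zpowers k₁) (hk₂ : centralizer {h₂} = zpowers k₂)
    {l₁ l₂ : ℤ} (hl₁ : h₁ = k₁ ^ l₁) (hl₂ : h₂ = k₂ ^ l₂) : |l₁| = |l₂| := by
  obtain ⟨c, rfl⟩ := isConj_iff.1 hconj
  have hzp : zpowers k₂ = zpowers (c * k₁ * c⁻¹) := by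
    rw [← hk₂, centralizer_singleton_conj, hk₁, MonoidHom.map_zpowers]
    rfl
  have hpow : k₂ ^ l₂ = (c * k₁ * c⁻¹) ^ l₁ := by rw [← hl₂, hl₁, conj_zpow]
  have hinj := injective_zpow_iff_not_isOfFinOrder.2 hk
  rcases (zpowers_eq_zpowers_iff hk).1 hzp with hk' | hk'
  · rw [← hk'] at hpow
    rw [hinj hpow]
  · rw [← hk', inv_zpow'] at hpow
    rw [hinj hpow, abs_neg]

section

variable {G : Type*} [Group G] {x y : G}

theorem injective_zpowersHom (hx : ¬IsOfFinOrder x) : Function.Injective (zpowersHom G x) :=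
  fun a b h => Multiplicative.toAdd.injective
    (injective_zpow_iff_not_isOfFinOrder.2 hx (by simpa [zpowersHom_apply] using h))

noncomputable def zpowersMulEquiv (hx : ¬IsOfFinOrder x) (hy : ¬IsOfFinOrder y) :
    zpowers x ≃* zpowers y :=
  (MonoidHom.ofInjective (injective_zpowersHom hx)).symm.trans
    (MonoidHom.ofInjective (injective_zpowersHom hy))

theorem zpowersMulEquiv_zpow (hx : ¬IsOfFinOrder x) (hy : ¬IsOfFinOrder y) (n : ℤ) :
    zpowersMulEquiv hx hy ⟨x ^ n, zpow_mem (mem_zpowers x) n⟩ =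
      ⟨y ^ n, zpow_mem (mem_zpowers y) n⟩ := by
  change MonoidHom.ofInjective (injective_zpowersHom hy)
    ((MonoidHom.ofInjective (injective_zpowersHom hx)).symm
      (MonoidHom.ofInjective (injective_zpowersHom hx) (Multiplicative.ofAdd n))) = _
  rw [MulEquiv.symm_apply_apply]
  rfl

end

namespace HNNExtension

open NormalWord

variable {G : Type*} [Group G] {A B : Subgroup G} {φ : A ≃* B}

variable (A B) in
/-- The letters `a = (u, g)` and `b`, standing for `t ^ u * g` and `t ^ b.1 * b.2`, do not form a
pinch `t ^ u * g * t ^ (-u)` with `g ∈ toSubgroup A B u`. -/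
def NoPinch (a b : ℤˣ × G) : Prop :=
  a.2 ∈ toSubgroup A B a.1 → a.1 = b.1

variable (A B) in
def IsCyclicallyReduced (L : List (ℤˣ × G)) : Prop :=
  L.IsChain (NoPinch A B) ∧ ∀ a ∈ L.getLast?, ∀ b ∈ L.head?, NoPinch A B a b

variable (φ) in
def wordProd (L : List (ℤˣ × G)) : HNNExtension G A B φ :=
  (L.map fun a => t ^ (a.1 : ℤ) * of a.2).prod

@[simp]
theorem wordProd_nil : wordProd φ [] = 1 := rfl

@[simp]
theorem wordProd_cons (a : ℤˣ × G) (L : List (ℤˣ × G)) :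
    wordProd φ (a :: L) = t ^ (a.1 : ℤ) * of a.2 * wordProd φ L := by
  simp [wordProd]

@[simp]
theorem wordProd_append (L M : List (ℤˣ × G)) :
    wordProd φ (L ++ M) = wordProd φ L * wordProd φ M := by
  simp [wordProd]

theorem wordProd_flatten_replicate (n : ℕ) (L : List (ℤˣ × G)) :
    wordProd φ (List.replicate n L).flatten = wordProd φ L ^ n := by
  induction n with
  | zero => simp
  | succ n ih => simp [List.replicate_succ, ih, pow_succ']

theorem isChain_noPinch_append_singleton {L : List (ℤˣ × G)} {u : ℤˣ} {g : G}
    (hL : (L ++ [(u, g)]).IsChain (NoPinch A B)) (g' : G) :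
    (L ++ [(u, g')]).IsChain (NoPinch A B) := by
  rw [List.isChain_append] at hL ⊢
  exact ⟨hL.1, List.isChain_singleton _, by simpa [NoPinch] using hL.2.2⟩

/-- Britton's lemma. -/
theorem wordProd_notMem_range {L : List (ℤˣ × G)} (hL : L.IsChain (NoPinch A B)) (hne : L ≠ []) :
    wordProd φ L ∉ (of : G →* HNNExtension G A B φ).range := by
  intro hmem
  refine hne (ReducedWord.toList_eq_nil_of_mem_of_range (φ := φ) ⟨1, L, hL⟩ ?_)
  simpa [ReducedWord.prod, wordProd] using hmem

theorem IsCyclicallyReduced.not_isOfFinOrder {L : List (ℤˣ × G)}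
    (hL : IsCyclicallyReduced A B L) (hne : L ≠ []) :
    ¬IsOfFinOrder (wordProd φ L) := by
  rintro hfin
  obtain ⟨n, hn, hpow⟩ := isOfFinOrder_iff_pow_eq_one.1 hfin
  have hchain : ((List.replicate n L).flatten).IsChain (NoPinch A B) := by
    rw [List.isChain_flatten (by simp [Ne.symm hne])]
    exact ⟨by simp [hL.1], List.isChain_replicate_of_rel n hL.2⟩
  refine wordProd_notMem_range (φ := φ) hchain (by simp [hne, hn.ne']) ?_
  rw [wordProd_flatten_replicate, hpow]
  exact one_mem _

theorem of_toSubgroupEquiv (u : ℤˣ) (a : toSubgroup A B u) :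
    (of (toSubgroupEquiv φ u a : G) : HNNExtension G A B φ) =
      t ^ (u : ℤ) * of (a : G) * (t ^ (u : ℤ))⁻¹ := by
  rcases Int.units_eq_one_or u with rfl | rfl
  · simp only [toSubgroupEquiv_one, Units.val_one, zpow_one]
    exact equiv_eq_conj a
  · simp only [toSubgroupEquiv_neg_one, Units.val_neg, Units.val_one, zpow_neg, zpow_one,
      inv_inv]
    exact equiv_symm_eq_conj a

theorem isConj_wordProd_pinch (u : ℤˣ) (g : G) (M : List (ℤˣ × G)) (c : toSubgroup A B u) :
    IsConj (wordProd φ ((-u, g) :: M ++ [(u, (c : G))]))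
      (wordProd φ M * of ((toSubgroupEquiv φ u c : G) * g)) := by
  refine isConj_iff.2 ⟨(of g)⁻¹ * t ^ (u : ℤ), ?_⟩
  rw [map_mul, of_toSubgroupEquiv]
  simp only [wordProd_append, wordProd_cons, wordProd_nil, Units.val_neg, zpow_neg]
  group

theorem exists_isConj_of_or_isCyclicallyReduced {L : List (ℤˣ × G)} (hL : L.IsChain (NoPinch A B))
    (g : G) :
    (∃ g' : G, IsConj (wordProd φ L * of g) (of g')) ∨
      ∃ L', L' ≠ [] ∧ IsCyclicallyReduced A B L' ∧
        IsConj (wordProd φ L * of g) (wordProd φ L') := by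
  induction hn : L.length using Nat.strong_induction_on generalizing L g with
  | _ n ih =>
  rcases L.eq_nil_or_concat with rfl | ⟨L₀, ⟨u, k⟩, rfl⟩
  · exact .inl ⟨g, by rw [wordProd_nil, one_mul]⟩
  simp only [List.concat_eq_append] at hL hn ⊢
  have hrot : wordProd φ (L₀ ++ [(u, k)]) * of g = wordProd φ (L₀ ++ [(u, k * g)]) := by
    simp [mul_assoc]
  have hL' := isChain_noPinch_append_singleton hL (k * g)
  rw [hrot]
  by_cases hcyc : IsCyclicallyReduced A B (L₀ ++ [(u, k * g)])
  · exact .inr ⟨_, by simp, hcyc, IsConj.refl _⟩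
  obtain ⟨⟨v, g₀⟩, M, rfl⟩ : ∃ b M, L₀ = b :: M := by
    refine L₀.exists_cons_of_ne_nil ?_
    rintro rfl
    exact hcyc ⟨hL', by simp [NoPinch]⟩
  have hpinch : k * g ∈ toSubgroup A B u ∧ v = -u := by
    simp only [IsCyclicallyReduced, hL', true_and, List.getLast?_append, List.getLast?_singleton,
      Option.mem_def, List.head?_append, List.head?_cons, Option.some_or, Option.some.injEq,
      forall_eq', NoPinch, Classical.not_imp] at hcyc
    exact ⟨hcyc.1, Int.units_ne_iff_eq_neg.1 (Ne.symm hcyc.2)⟩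
  obtain ⟨hmem, rfl⟩ := hpinch
  -- the pinch straddles the end and the start of the word: conjugating it away shortens the word
  have hconj := isConj_wordProd_pinch (φ := φ) u g₀ M ⟨k * g, hmem⟩
  have hM : M.IsChain (NoPinch A B) := hL'.left_of_append.tail
  rcases ih M.length (by simp [← hn]) hM _ rfl with ⟨g', hg'⟩ | ⟨L', hne, hcyc', hc'⟩
  · exact .inl ⟨g', hconj.trans hg'⟩
  · exact .inr ⟨L', hne, hcyc', hconj.trans hc'⟩

theorem eq_one_of_isOfFinOrder (hG : ∀ g : G, IsOfFinOrder g → g = 1)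
    {x : HNNExtension G A B φ} (hx : IsOfFinOrder x) : x = 1 := by
  obtain ⟨d⟩ := TransversalPair.nonempty G A B
  set w := NormalWord.equiv φ d x
  have hxw : IsConj x (wordProd φ w.toList * of w.head) := by
    refine isConj_iff.2 ⟨(of w.head)⁻¹, ?_⟩
    conv_lhs => rw [← (NormalWord.equiv φ d).symm_apply_apply x]
    simp [NormalWord.equiv, ReducedWord.prod, wordProd, w]
  rcases exists_isConj_of_or_isCyclicallyReduced w.chain w.head with ⟨g, hg⟩ | ⟨L, hne, hL, hconj⟩
  · have hg1 : g = 1 :=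
      hG g <| ((of_injective φ).isOfFinOrder_iff).1 ((hxw.trans hg).isOfFinOrder hx)
    rw [hg1, map_one] at hg
    exact isConj_one_right.1 (isConj_comm.1 (hxw.trans hg))
  · exact absurd ((hxw.trans hconj).isOfFinOrder hx) (hL.not_isOfFinOrder hne)

end HNNExtension

namespace SurfaceGroup

def gen (g : ℕ) : Fin g ⊕ Fin g → SurfaceGroup g := PresentedGroup.of

theorem lift_gen_surfaceRelator (g : ℕ) : FreeGroup.lift (gen g) (surfaceRelator g) = 1 := by
  have : FreeGroup.lift (gen g) = PresentedGroup.mk _ := FreeGroup.ext_hom _ _ fun _ => rfl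
  rw [this]
  exact PresentedGroup.one_of_mem rfl

theorem lift_surfaceRelator_succ {m : ℕ} {H : Type*} [Group H]
    (f : Fin (m + 1) ⊕ Fin (m + 1) → H) :
    FreeGroup.lift f (surfaceRelator (m + 1)) =
      ⁅f (Sum.inl 0), f (Sum.inr 0)⁆ *
        ((List.finRange m).map fun j => ⁅f (Sum.inl j.succ), f (Sum.inr j.succ)⁆).prod := by
  simp [surfaceRelator, map_list_prod, List.finRange_succ, Function.comp_def,
    map_commutatorElement]

/-- In the free group on `Fin m ⊕ Fin (m + 1)`, `Sum.inl j` stands for `a_{j+1}` and `Sum.inr i`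
for `bᵢ`; this is `∏_{i ≥ 1} [aᵢ, bᵢ]`. -/
def tailRelator (m : ℕ) : FreeGroup (Fin m ⊕ Fin (m + 1)) :=
  ((List.finRange m).map fun j =>
    ⁅FreeGroup.of (Sum.inl j : Fin m ⊕ Fin (m + 1)), FreeGroup.of (Sum.inr j.succ)⁆).prod

theorem map_tailRelator {m : ℕ} {H : Type*} [Group H] (f : FreeGroup (Fin m ⊕ Fin (m + 1)) →* H) :
    f (tailRelator m) =
      ((List.finRange m).map fun j =>
        ⁅f (FreeGroup.of (Sum.inl j)), f (FreeGroup.of (Sum.inr j.succ))⁆).prod := by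
  simp [tailRelator, map_list_prod, Function.comp_def, map_commutatorElement]

variable (m : ℕ)

abbrev b₀ : FreeGroup (Fin m ⊕ Fin (m + 1)) := FreeGroup.of (Sum.inr 0)

theorem not_isOfFinOrder_b₀ : ¬IsOfFinOrder (b₀ m) :=
  not_isOfFinOrder_of_isMulTorsionFree (FreeGroup.of_ne_one _)

theorem not_isOfFinOrder_tailRelator_inv_mul_b₀ : ¬IsOfFinOrder ((tailRelator m)⁻¹ * b₀ m) := by
  refine not_isOfFinOrder_of_isMulTorsionFree fun h => ?_
  have := congrArg (FreeGroup.lift fun _ => Multiplicative.ofAdd (1 : ℤ)) h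
  simp [map_tailRelator] at this

noncomputable def stableConj : zpowers (b₀ m) ≃* zpowers ((tailRelator m)⁻¹ * b₀ m) :=
  zpowersMulEquiv (not_isOfFinOrder_b₀ m) (not_isOfFinOrder_tailRelator_inv_mul_b₀ m)

theorem stableConj_zpow (n : ℤ) :
    stableConj m ⟨b₀ m ^ n, zpow_mem (mem_zpowers _) n⟩ =
      ⟨((tailRelator m)⁻¹ * b₀ m) ^ n, zpow_mem (mem_zpowers _) n⟩ :=
  zpowersMulEquiv_zpow _ _ n

abbrev HNNModel : Type :=
  HNNExtension (FreeGroup (Fin m ⊕ Fin (m + 1))) _ _ (stableConj m)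

open HNNExtension

theorem t_conj_b₀ : (t : HNNModel m) * of (b₀ m) * t⁻¹ = of ((tailRelator m)⁻¹ * b₀ m) := by
  have h := stableConj_zpow m 1
  simp only [zpow_one] at h
  have := equiv_eq_conj (φ := stableConj m) ⟨b₀ m, mem_zpowers _⟩
  rw [h] at this
  exact this.symm

noncomputable def hnnGen : Fin (m + 1) ⊕ Fin (m + 1) → HNNModel m
  | Sum.inl i => Fin.cases t (fun j => of (FreeGroup.of (Sum.inl j))) i
  | Sum.inr i => of (FreeGroup.of (Sum.inr i))

noncomputable def toHNNModel : SurfaceGroup (m + 1) →* HNNModel m :=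
  PresentedGroup.toGroup (f := hnnGen m) <| by
    rintro _ rfl
    have htail : ((List.finRange m).map fun j => ⁅hnnGen m (Sum.inl j.succ),
        hnnGen m (Sum.inr j.succ)⁆).prod = of (tailRelator m) := by
      rw [map_tailRelator]; rfl
    rw [lift_surfaceRelator_succ, htail]
    change ⁅t, of (b₀ m)⁆ * _ = 1
    rw [commutatorElement_def, t_conj_b₀]
    simp

noncomputable def baseToSurface : FreeGroup (Fin m ⊕ Fin (m + 1)) →* SurfaceGroup (m + 1) :=
  FreeGroup.lift <| Sum.elim (fun j => gen _ (Sum.inl j.succ)) (fun i => gen _ (Sum.inr i))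

theorem baseToSurface_tailRelator_inv_mul_b₀ :
    baseToSurface m ((tailRelator m)⁻¹ * b₀ m) =
      gen _ (Sum.inl 0) * gen _ (Sum.inr 0) * (gen _ (Sum.inl 0))⁻¹ := by
  have hrel := lift_gen_surfaceRelator (m + 1)
  rw [lift_surfaceRelator_succ, commutatorElement_def] at hrel
  rw [map_mul, map_inv, map_tailRelator]
  simp only [baseToSurface, FreeGroup.lift_apply_of, Sum.elim_inl, Sum.elim_inr]
  rw [← eq_inv_of_mul_eq_one_left hrel]
  group

noncomputable def ofHNNModel : HNNModel m →* SurfaceGroup (m + 1) :=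
  HNNExtension.lift (baseToSurface m) (gen _ (Sum.inl 0)) <| by
    rintro ⟨_, n, rfl⟩
    rw [stableConj_zpow, map_zpow, map_zpow, baseToSurface_tailRelator_inv_mul_b₀, conj_zpow]
    simp [baseToSurface]

theorem toHNNModel_gen (i : Fin (m + 1) ⊕ Fin (m + 1)) : toHNNModel m (gen _ i) = hnnGen m i :=
  PresentedGroup.toGroup.of _

theorem ofHNNModel_comp_toHNNModel : (ofHNNModel m).comp (toHNNModel m) = MonoidHom.id _ := by
  refine PresentedGroup.ext fun i => ?_
  change ofHNNModel m (toHNNModel m (gen _ i)) = gen _ i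
  rw [toHNNModel_gen]
  rcases i with i | i
  · cases i using Fin.cases <;> simp [ofHNNModel, hnnGen, baseToSurface]
  · simp [ofHNNModel, hnnGen, baseToSurface]

theorem toHNNModel_injective : Function.Injective (toHNNModel m) :=
  Function.LeftInverse.injective (g := ofHNNModel m)
    (DFunLike.congr_fun (ofHNNModel_comp_toHNNModel m))

theorem eq_one_of_isOfFinOrder {g : ℕ} {x : SurfaceGroup g} (hx : IsOfFinOrder x) : x = 1 := by
  cases g with
  | zero =>
    have : Subsingleton (SurfaceGroup 0) := (PresentedGroup.mk_surjective _).subsingleton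
    exact Subsingleton.elim _ _
  | succ m =>
    refine toHNNModel_injective m ?_
    rw [map_one]
    exact HNNExtension.eq_one_of_isOfFinOrder
      (fun _ hg => by_contra fun h => not_isOfFinOrder_of_isMulTorsionFree h hg)
      ((toHNNModel m).isOfFinOrder hx)

end SurfaceGroup

theorem level_conj_invariant_general (g : ℕ)
    (h₁ h₂ k₁ k₂ : SurfaceGroup g) (hh₂ : h₂ ≠ 1)
    (hconj : IsConj h₁ h₂)
    (hk₁ : Subgroup.centralizer ({h₁} : Set (SurfaceGroup g)) = Subgroup.zpowers k₁)
    (hk₂ : Subgroup.centralizer ({h₂} : Set (SurfaceGroup g)) = Subgroup.zpowers k₂)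
    (l₁ l₂ : ℤ) (hl₁ : h₁ = k₁ ^ l₁) (hl₂ : h₂ = k₂ ^ l₂) :
    |l₁| = |l₂| := by
  refine abs_eq_abs_of_isConj_of_centralizer_eq_zpowers (fun hfin => hh₂ ?_) hconj hk₁ hk₂ hl₁ hl₂
  rw [hl₂, SurfaceGroup.eq_one_of_isOfFinOrder hfin, one_zpow]

/-- For `g ≥ 2`, the level of a nontrivial element of the genus-`g` surface group is a
conjugacy invariant: if `h₁` and `h₂` are conjugate nontrivial elements whose centralizers
are generated by `k₁` and `k₂` respectively, and `h₁ = k₁ ^ l₁`, `h₂ = k₂ ^ l₂`,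
then `|l₁| = |l₂|`. -/
theorem level_conj_invariant (g : ℕ) (hg : 2 ≤ g)
    (h₁ h₂ k₁ k₂ : SurfaceGroup g) (hh₁ : h₁ ≠ 1) (hh₂ : h₂ ≠ 1)
    (hconj : IsConj h₁ h₂)
    (hk₁ : Subgroup.centralizer ({h₁} : Set (SurfaceGroup g)) = Subgroup.zpowers k₁)
    (hk₂ : Subgroup.centralizer ({h₂} : Set (SurfaceGroup g)) = Subgroup.zpowers k₂)
    (l₁ l₂ : ℤ) (hl₁ : h₁ = k₁ ^ l₁) (hl₂ : h₂ = k₂ ^ l₂) :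
    |l₁| = |l₂| :=
  level_conj_invariant_general g h₁ h₂ k₁ k₂ hh₂ hconj hk₁ hk₂ l₁ l₂ hl₁ hl₂
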